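/- Policy gradient theorem for directional derivatives: for any policies π, π' (viewed as vectors in ℝ^{|S|·|A|}), ⟨∇J(π), π' - π⟩ = Σ_{s} Σ_{a} η_π(s) Q_π(s,a) (π'(s,a) - π(s,a)). -/

import Mathlib

/-! Write `P_p` and `r_p` for the transition matrix and reward vector of a policy `p`; both are
linear in `p`, and `J p = (1 - γ) ρᵀ (1 - γ P_p)⁻¹ r_p`. Give matrices the ∞-operator norm (maximal
absolute row sum): a row-stochastic `P_π` has norm at most `1`, so `1 - γ P_π` is invertible with
Neumann series `∑ₜ γᵗ P_πᵗ`. Hence `η = (1 - γ) ρᵀ (1 - γ P_π)⁻¹` and, by the Bellman equation,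
`V = (1 - γ P_π)⁻¹ r_π`. Differentiating `A ↦ A⁻¹` gives
`dJ_π h = (1 - γ) ρᵀ (1 - γ P_π)⁻¹ (r_h + γ P_h V) = ηᵀ (r_h + γ P_h V)`,
and `(r_h + γ P_h V) s = ∑ₐ h(s, a) Q(s, a)`. -/

open Finset Matrix

attribute [local instance] Matrix.linftyOpNormedRing Matrix.linftyOpNormedAlgebra

section MatrixAnalysis

variable {𝕜 E n : Type*} [RCLike 𝕜] [NormedAddCommGroup E] [NormedSpace 𝕜 E]
  [Fintype n] [DecidableEq n]

theorem HasFDerivAt.matrix_inv_mulVec {f : E → Matrix n n 𝕜} {f' : E →L[𝕜] Matrix n n 𝕜}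
    {v : E → n → 𝕜} {v' : E →L[𝕜] n → 𝕜} {x : E}
    (hf : HasFDerivAt f f' x) (hv : HasFDerivAt v v' x) (hx : IsUnit (f x)) :
    ∃ D : E →L[𝕜] n → 𝕜, HasFDerivAt (fun y => (f y)⁻¹ *ᵥ v y) D x ∧
      ∀ h, D h = (f x)⁻¹ *ᵥ (v' h - f' h *ᵥ ((f x)⁻¹ *ᵥ v x)) := by
  obtain ⟨u, hu⟩ := hx
  let B : Matrix n n 𝕜 →L[𝕜] (n → 𝕜) →L[𝕜] n → 𝕜 :=
    (Matrix.toLin' : Matrix n n 𝕜 ≃ₗ[𝕜] _).toLinearMap.toContinuousBilinearMap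
  have hu_inv : (↑u⁻¹ : Matrix n n 𝕜) = (f x)⁻¹ := by
    rw [nonsing_inv_eq_ringInverse, ← hu, Ring.inverse_unit]
  have hinv : HasFDerivAt (fun y => Ring.inverse (f y))
      ((-ContinuousLinearMap.mulLeftRight 𝕜 _ (f x)⁻¹ (f x)⁻¹).comp f') x := by
    have h := hasFDerivAt_ringInverse (𝕜 := 𝕜) u
    rw [hu_inv, hu] at h
    exact h.comp x hf
  have hfun : (fun y => (f y)⁻¹ *ᵥ v y) = fun y => B (Ring.inverse (f y)) (v y) := by
    funext y
    simp [B, nonsing_inv_eq_ringInverse]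
  refine ⟨_, hfun ▸ B.hasFDerivAt_of_bilinear hinv hv, fun h => ?_⟩
  change B (Ring.inverse (f x)) (v' h) + B (-((f x)⁻¹ * f' h * (f x)⁻¹)) (v x) = _
  simp [B, ← nonsing_inv_eq_ringInverse, mulVec_mulVec, Matrix.mul_assoc,
    sub_eq_add_neg, mulVec_add, mulVec_neg]

theorem hasSum_pow_smul_vecMul_pow {γ : 𝕜} {x : Matrix n n 𝕜} (hx : ‖γ • x‖ < 1) (ρ : n → 𝕜) :
    HasSum (fun t : ℕ => γ ^ t • (ρ ᵥ* x ^ t)) (ρ ᵥ* (1 - γ • x)⁻¹) := by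
  rw [nonsing_inv_eq_ringInverse]
  simpa [Function.comp_def, smul_pow, vecMul_smul] using (hasSum_geom_series_inverse _ hx).map
    (AddMonoidHom.mk' (ρ ᵥ* ·) fun A B => vecMul_add A B ρ)
    (continuous_const.matrix_vecMul continuous_id)

end MatrixAnalysis

theorem Matrix.eq_inv_mulVec_of_eq_add_mulVec {K n : Type*} [CommRing K] [Fintype n]
    [DecidableEq n] {M : Matrix n n K} {v b : n → K} (h : v = b + M *ᵥ v)
    (hM : IsUnit (1 - M)) : v = (1 - M)⁻¹ *ᵥ b := by
  have : Invertible (1 - M) := hM.invertible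
  refine (inv_mulVec_eq_vec ?_).symm
  rw [sub_mulVec, one_mulVec, eq_sub_iff_add_eq, ← h]

section RowStochastic

variable {n : Type*} [Fintype n] [DecidableEq n] {M : Matrix n n ℝ}

theorem Matrix.linfty_opNorm_le_one_of_mem_rowStochastic (hM : M ∈ rowStochastic ℝ n) :
    ‖M‖ ≤ 1 := by
  rw [linfty_opNorm_def, ← NNReal.coe_one, NNReal.coe_le_coe]
  refine Finset.sup_le fun i _ => ?_
  rw [← NNReal.coe_le_coe]
  push_cast
  simp_rw [Real.norm_of_nonneg (nonneg_of_mem_rowStochastic hM)]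
  exact (sum_row_of_mem_rowStochastic hM i).le

theorem Matrix.linfty_opNorm_smul_lt_one_of_mem_rowStochastic (hM : M ∈ rowStochastic ℝ n) {γ : ℝ}
    (hγ : |γ| < 1) : ‖γ • M‖ < 1 := by
  rw [norm_smul, Real.norm_eq_abs]
  exact (mul_le_of_le_one_right (abs_nonneg γ)
    (linfty_opNorm_le_one_of_mem_rowStochastic hM)).trans_lt hγ

end RowStochastic

section MDP

variable {S A : Type*} [Fintype S] [Fintype A]

def policyTransition (P : S → A → S → ℝ) : (S → A → ℝ) →ₗ[ℝ] Matrix S S ℝ where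
  toFun p := of fun s s' => ∑ a, p s a * P s a s'
  map_add' p q := by ext; simp [add_mul, sum_add_distrib]
  map_smul' c p := by ext; simp [mul_sum, mul_assoc]

def policyReward (r : S → A → ℝ) : (S → A → ℝ) →ₗ[ℝ] S → ℝ where
  toFun p s := ∑ a, p s a * r s a
  map_add' p q := by ext; simp [add_mul, sum_add_distrib]
  map_smul' c p := by ext; simp [mul_sum, mul_assoc]

theorem policyTransition_mem_rowStochastic [DecidableEq S] {P : S → A → S → ℝ}
    (hP : ∀ s a, P s a ∈ stdSimplex ℝ S) {π : S → A → ℝ} (hπ : ∀ s, π s ∈ stdSimplex ℝ A) :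
    policyTransition P π ∈ rowStochastic ℝ S := by
  refine mem_rowStochastic_iff_sum.2 ⟨fun s s' => sum_nonneg fun a _ =>
    mul_nonneg ((hπ s).1 a) ((hP s a).1 s'), fun s => ?_⟩
  calc ∑ s', ∑ a, π s a * P s a s' = ∑ a, π s a * ∑ s', P s a s' := by
        rw [sum_comm]; simp only [mul_sum]
    _ = 1 := by simp [(hP _ _).2, (hπ s).2]

theorem policyReward_add_smul_policyTransition_mulVec (r : S → A → ℝ) (P : S → A → S → ℝ)
    (γ : ℝ) (V : S → ℝ) (h : S → A → ℝ) (s : S) :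
    (policyReward r h + γ • (policyTransition P h *ᵥ V)) s =
      ∑ a, h s a * (r s a + γ * ∑ s', P s a s' * V s') := by
  simp only [policyReward, policyTransition, LinearMap.coe_mk, AddHom.coe_mk, Pi.add_apply,
    Pi.smul_apply, smul_eq_mul, mulVec, dotProduct, of_apply, mul_add, sum_add_distrib,
    mul_sum, sum_mul]
  rw [sum_comm (f := fun s' a => _)]
  simp only [mul_comm, mul_left_comm]

noncomputable def policyValue [DecidableEq S] (r : S → A → ℝ) (P : S → A → S → ℝ) (γ : ℝ)
    (p : S → A → ℝ) : S → ℝ :=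
  (1 - γ • policyTransition P p)⁻¹ *ᵥ policyReward r p

theorem hasFDerivAt_policyValue [DecidableEq S] (r : S → A → ℝ) (P : S → A → S → ℝ) (γ : ℝ)
    {π : S → A → ℝ} (hunit : IsUnit (1 - γ • policyTransition P π)) :
    ∃ D : (S → A → ℝ) →L[ℝ] S → ℝ, HasFDerivAt (policyValue r P γ) D π ∧
      ∀ h, D h = (1 - γ • policyTransition P π)⁻¹ *ᵥ
        (policyReward r h + γ • (policyTransition P h *ᵥ policyValue r P γ π)) := by
  let T := (policyTransition P).toContinuousLinearMap
  have hM : HasFDerivAt (fun p => 1 - γ • policyTransition P p) (0 - γ • T) π :=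
    (hasFDerivAt_const 1 π).sub (T.hasFDerivAt.const_smul γ)
  obtain ⟨D, hD, hD_apply⟩ :=
    hM.matrix_inv_mulVec (policyReward r).toContinuousLinearMap.hasFDerivAt hunit
  refine ⟨D, hD, fun h => ?_⟩
  rw [hD_apply]
  change _ *ᵥ (_ - (0 - γ • T h) *ᵥ policyValue r P γ π) = _
  rw [zero_sub, neg_mulVec, sub_neg_eq_add, smul_mulVec]
  rfl

end MDP

theorem policy_gradient_theorem_general
    {S A : Type} [Fintype S] [Fintype A] [DecidableEq S]
    (r : S → A → ℝ) (P : S → A → S → ℝ)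
    (hP : ∀ s a, P s a ∈ stdSimplex ℝ S)
    (γ : ℝ) (hγ : γ ∈ Set.Ioo (0 : ℝ) 1)
    (ρ : S → ℝ)
    -- J(p) = (1-γ) ρᵀ V_p with V_p = (I - γ P_p)⁻¹ r_p
    (J : (S → A → ℝ) → ℝ)
    (hJ : ∀ p : S → A → ℝ, J p = (1 - γ) * ∑ s, ρ s *
      (((1 - γ • Matrix.of fun s₁ s₂ => ∑ a, p s₁ a * P s₁ a s₂)⁻¹
        *ᵥ fun s₁ => ∑ a, p s₁ a * r s₁ a) s))
    (π : S → A → ℝ) (hπ : ∀ s, π s ∈ stdSimplex ℝ A)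
    (V : S → ℝ)
    (hV : ∀ s, V s = (∑ a, π s a * r s a) + γ * ∑ s', (∑ a, π s a * P s a s') * V s')
    (Q : S → A → ℝ) (hQ : ∀ s a, Q s a = r s a + γ * ∑ s', P s a s' * V s')
    (η : S → ℝ)
    (hη : ∀ s, η s = (1 - γ) *
      ∑' t : ℕ, γ ^ t * ((ρ ᵥ* (Matrix.of fun s₁ s₂ => ∑ a, π s₁ a * P s₁ a s₂) ^ t) s)) :
    ∃ D : (S → A → ℝ) →L[ℝ] ℝ, HasFDerivAt J D π ∧
      ∀ π' : S → A → ℝ, (∀ s, π' s ∈ stdSimplex ℝ A) →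
        D (π' - π) = ∑ s, ∑ a, η s * Q s a * (π' s a - π s a) := by
  set T := policyTransition P
  have hsmall : ‖γ • T π‖ < 1 :=
    linfty_opNorm_smul_lt_one_of_mem_rowStochastic (policyTransition_mem_rowStochastic hP hπ)
      (abs_lt.2 ⟨by linarith [hγ.1], hγ.2⟩)
  have hunit : IsUnit (1 - γ • T π) := isUnit_one_sub_of_norm_lt_one hsmall
  have hV_eq : V = policyValue r P γ π :=
    eq_inv_mulVec_of_eq_add_mulVec (funext fun s => (hV s).trans (by rw [smul_mulVec]; rfl)) hunit
  have hη_eq : η = (1 - γ) • (ρ ᵥ* (1 - γ • T π)⁻¹) := funext fun s => by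
    rw [hη s, Pi.smul_apply, smul_eq_mul,
      ← (Pi.hasSum.1 (hasSum_pow_smul_vecMul_pow hsmall ρ) s).tsum_eq]
    rfl
  obtain ⟨D, hD, hD_apply⟩ := hasFDerivAt_policyValue r P γ hunit
  let ℓ : (S → ℝ) →L[ℝ] ℝ := (1 - γ) • (dotProductBilin ℝ ℝ ρ).toContinuousLinearMap
  refine ⟨ℓ.comp D, (funext hJ : J = ℓ ∘ policyValue r P γ) ▸ ℓ.hasFDerivAt.comp π hD,
    fun π' _ => ?_⟩
  calc ℓ (D (π' - π)) = η ⬝ᵥ (policyReward r (π' - π) + γ • (T (π' - π) *ᵥ V)) := by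
        rw [hη_eq, smul_dotProduct, ← dotProduct_mulVec, hV_eq, ← hD_apply]
        rfl
    _ = ∑ s, ∑ a, η s * Q s a * (π' s a - π s a) := by
        simp only [dotProduct, T, policyReward_add_smul_policyTransition_mulVec, mul_sum, hQ,
          Pi.sub_apply]
        exact sum_congr rfl fun s _ => sum_congr rfl fun a _ => by ring

/-- Policy gradient theorem for directional derivatives:
⟨∇J(π), π' - π⟩ = Σ_s Σ_a η_π(s) Q_π(s,a) (π'(s,a) - π(s,a)). -/
theorem policy_gradient_theorem
    {S A : Type} [Fintype S] [Fintype A] [DecidableEq S] [Nonempty S] [Nonempty A]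
    (r : S → A → ℝ) (P : S → A → S → ℝ)
    (hP : ∀ s a, P s a ∈ stdSimplex ℝ S)
    (γ : ℝ) (hγ : γ ∈ Set.Ioo (0 : ℝ) 1)
    (ρ : S → ℝ) (hρ : ρ ∈ stdSimplex ℝ S)
    -- J(p) = (1-γ) ρᵀ V_p with V_p = (I - γ P_p)⁻¹ r_p
    (J : (S → A → ℝ) → ℝ)
    (hJ : ∀ p : S → A → ℝ, J p = (1 - γ) * ∑ s, ρ s *
      (((1 - γ • Matrix.of fun s₁ s₂ => ∑ a, p s₁ a * P s₁ a s₂)⁻¹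
        *ᵥ fun s₁ => ∑ a, p s₁ a * r s₁ a) s))
    (π : S → A → ℝ) (hπ : ∀ s, π s ∈ stdSimplex ℝ A)
    (V : S → ℝ)
    (hV : ∀ s, V s = (∑ a, π s a * r s a) + γ * ∑ s', (∑ a, π s a * P s a s') * V s')
    (Q : S → A → ℝ) (hQ : ∀ s a, Q s a = r s a + γ * ∑ s', P s a s' * V s')
    (η : S → ℝ)
    (hη : ∀ s, η s = (1 - γ) *
      ∑' t : ℕ, γ ^ t * ((ρ ᵥ* (Matrix.of fun s₁ s₂ => ∑ a, π s₁ a * P s₁ a s₂) ^ t) s)) :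
    ∃ D : (S → A → ℝ) →L[ℝ] ℝ, HasFDerivAt J D π ∧
      ∀ π' : S → A → ℝ, (∀ s, π' s ∈ stdSimplex ℝ A) →
        D (π' - π) = ∑ s, ∑ a, η s * Q s a * (π' s a - π s a) :=
  policy_gradient_theorem_general r P hP γ hγ ρ J hJ π hπ V hV Q hQ η hη
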